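/- arXiv:1812.04190 — 2 statements merged into one kernel-verified Lean document; each statement's English description precedes it below -/
import Mathlib

section
/- Let G be a connected weighted graph and let G' be obtained from G by splitting a vertex v into two vertices v₁, v₂ (each edge formerly incident to v is reassigned to exactly one of v₁, v₂), such that G' is connected. Then the minimum spanning tree weight of G is at most the minimum spanning tree weight of G'. -/
/-
Projecting the two copies of `v` back onto `v` maps every path of `G'` to a path of `G`, so each
spanning tree `T'` of `G'` still connects `G`. It therefore contains a spanning tree of `G`, whose
weight is at most that of `T'` because weights are nonnegative.
-/

open Finset

def Connects {R E : Type*} (ends : E → R × R) (S : Finset E) : Prop :=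
  ∀ r s : R,
    Relation.ReflTransGen (fun a b => ∃ e ∈ S, ends e = (a, b) ∨ ends e = (b, a)) r s

def IsSpanningTree {R E : Type*} [DecidableEq E] (ends : E → R × R) (S : Finset E) : Prop :=
  Connects ends S ∧ ∀ e ∈ S, ¬ Connects ends (S.erase e)

noncomputable def mstCost {R E : Type*} [DecidableEq E] (ends : E → R × R)
    (cost : E → ℝ) (𝒯 : Finset E) : ℝ :=
  sInf {c : ℝ | ∃ S ⊆ 𝒯, IsSpanningTree ends S ∧ ∑ e ∈ S, cost e = c}

/-- The vertex set obtained from `V` by splitting the vertex `v` into two copies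
(`Sum.inr false` and `Sum.inr true`). -/
abbrev SplitVertices (V : Type*) (v : V) := {u : V // u ≠ v} ⊕ Bool

/-- Projection from the split vertex set back to `V`: both copies map to `v`. -/
def splitProj {V : Type*} (v : V) : SplitVertices V v → V :=
  Sum.elim Subtype.val fun _ => v

lemma Connects.exists_isSpanningTree {R E : Type*} [DecidableEq E] {ends : E → R × R}
    {S : Finset E} (hS : Connects ends S) : ∃ T ⊆ S, IsSpanningTree ends T := by
  induction S using Finset.strongInduction with
  | H S ih =>
    by_cases hmin : ∀ e ∈ S, ¬ Connects ends (S.erase e)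
    · exact ⟨S, subset_rfl, hS, hmin⟩
    · push Not at hmin
      obtain ⟨e, he, hconn⟩ := hmin
      obtain ⟨T, hTS, hT⟩ := ih (S.erase e) (erase_ssubset he) hconn
      exact ⟨T, hTS.trans (erase_subset e S), hT⟩

lemma Connects.of_surjective {R R' E : Type*} {ends : E → R × R} {ends' : E → R' × R'}
    {f : R' → R} (hf : Function.Surjective f)
    (hends : ∀ e, ends e = (f (ends' e).1, f (ends' e).2)) {S : Finset E}
    (hS : Connects ends' S) : Connects ends S := by
  intro r s
  obtain ⟨r', rfl⟩ := hf r
  obtain ⟨s', rfl⟩ := hf s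
  refine Relation.ReflTransGen.lift f ?_ r' s' (hS r' s')
  rintro a b ⟨e, he, hab | hab⟩
  · exact ⟨e, he, Or.inl (by rw [hends e, hab])⟩
  · exact ⟨e, he, Or.inr (by rw [hends e, hab])⟩

lemma splitProj_surjective {V : Type*} (v : V) : Function.Surjective (splitProj v) := by
  intro u
  by_cases h : u = v
  · exact ⟨Sum.inr true, h.symm⟩
  · exact ⟨Sum.inl ⟨u, h⟩, rfl⟩

lemma mstCost_le_sum_of_connects {R E : Type*} [DecidableEq E] {ends : E → R × R}
    {w : E → ℝ} (hw : ∀ e, 0 ≤ w e) {𝒯 S : Finset E} (hS𝒯 : S ⊆ 𝒯)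
    (hS : Connects ends S) : mstCost ends w 𝒯 ≤ ∑ e ∈ S, w e := by
  obtain ⟨T, hTS, hT⟩ := hS.exists_isSpanningTree
  have hbdd : BddBelow {c : ℝ | ∃ S ⊆ 𝒯, IsSpanningTree ends S ∧ ∑ e ∈ S, w e = c} :=
    ⟨0, by rintro c ⟨S, -, -, rfl⟩; exact sum_nonneg fun e _ => hw e⟩
  calc mstCost ends w 𝒯 ≤ ∑ e ∈ T, w e := csInf_le hbdd ⟨T, hTS.trans hS𝒯, hT, rfl⟩
    _ ≤ ∑ e ∈ S, w e := sum_le_sum_of_subset_of_nonneg hTS fun e _ _ => hw e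

theorem stmt1_general {V E : Type*} [DecidableEq E] (v : V) (𝒯 : Finset E)
    (ends' : E → SplitVertices V v × SplitVertices V v) (ends : E → V × V)
    (hproj : ∀ e, ends e = (splitProj v (ends' e).1, splitProj v (ends' e).2))
    (w : E → ℝ) (hw : ∀ e, 0 ≤ w e)
    (hG'conn : Connects ends' 𝒯) :
    mstCost ends w 𝒯 ≤ mstCost ends' w 𝒯 := by
  obtain ⟨T', hT'𝒯, hT'⟩ := hG'conn.exists_isSpanningTree
  refine le_csInf ⟨∑ e ∈ T', w e, T', hT'𝒯, hT', rfl⟩ ?_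
  rintro c ⟨S, hS𝒯, hS, rfl⟩
  exact mstCost_le_sum_of_connects hw hS𝒯 <|
    hS.1.of_surjective (splitProj_surjective v) hproj

/-- If `G'` is obtained from the connected weighted graph `G` by splitting vertex `v`
into two (each edge endpoint formerly at `v` reassigned to one of the two copies),
and `G'` is connected, then the MST weight of `G` is at most the MST weight of `G'`. -/
theorem stmt1 {V E : Type*} [DecidableEq E] (v : V) (𝒯 : Finset E)
    (ends' : E → SplitVertices V v × SplitVertices V v) (ends : E → V × V)
    (hproj : ∀ e, ends e = (splitProj v (ends' e).1, splitProj v (ends' e).2))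
    (w : E → ℝ) (hw : ∀ e, 0 ≤ w e)
    (hGconn : Connects ends 𝒯)
    (hG'conn : Connects ends' 𝒯) :
    mstCost ends w 𝒯 ≤ mstCost ends' w 𝒯 :=
  stmt1_general v 𝒯 ends' ends hproj w hw hG'conn
end

section
/- If f, h : Fin (n+1) → ℤ both satisfy the constraints h(n) = 0, h(i) ≥ h(i+1) + g(i), h(i) ≥ m(i), and f is defined by the backward recursion f(i) = max(f(i+1) + g(i), m(i)) with f(n) = 0, then ∑ f(i) ≤ ∑ h(i); i.e., the Waterfall height assignment minimizes the total number of blocks among all feasible assignments. -/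
/-! By backward induction from `n`, the waterfall assignment lies pointwise below every feasible
assignment, because `x ↦ max (x + g i) (m i)` is monotone and a feasible `h` satisfies
`max (h (i+1) + g i) (m i) ≤ h i`; summing gives the inequality of costs. -/

theorem waterfall_le_of_feasible {α : Type*} [LinearOrder α] [Add α] [AddRightMono α] {n : ℕ}
    {g m : Fin n → α} {f h : Fin (n + 1) → α} (hlast : f (Fin.last n) ≤ h (Fin.last n))
    (hf : ∀ i : Fin n, f i.castSucc = max (f i.succ + g i) (m i))
    (hstep : ∀ i : Fin n, h i.succ + g i ≤ h i.castSucc)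
    (hlower : ∀ i : Fin n, m i ≤ h i.castSucc) (i : Fin (n + 1)) :
    f i ≤ h i := by
  induction i using Fin.reverseInduction with
  | last => exact hlast
  | cast i ih =>
    rw [hf i]
    exact max_le ((add_le_add_left ih _).trans (hstep i)) (hlower i)

/-- The Waterfall height assignment `f`, defined by the backward recursion
`f(n) = 0`, `f(i) = max(f(i+1) + g(i), m(i))`, minimizes the total number of blocks
`∑ f(i)` among all feasible integer assignments `h` (those with `h(n) = 0`,
`h(i) ≥ h(i+1) + g(i)` and `h(i) ≥ m(i)` for all `i < n`). -/
theorem stmt8 (n : ℕ) (g m : Fin n → ℤ) (f h : Fin (n + 1) → ℤ)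
    (hf0 : f (Fin.last n) = 0)
    (hfrec : ∀ i : Fin n, f i.castSucc = max (f i.succ + g i) (m i))
    (hh0 : h (Fin.last n) = 0)
    (hh1 : ∀ i : Fin n, h i.succ + g i ≤ h i.castSucc)
    (hh2 : ∀ i : Fin n, m i ≤ h i.castSucc) :
    ∑ i, f i ≤ ∑ i, h i :=
  Finset.sum_le_sum fun i _ =>
    waterfall_le_of_feasible (hf0.trans hh0.symm).le hfrec hh1 hh2 i
end
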